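/- arXiv:1503.00036 — 3 statements merged into one kernel-verified Lean document; each statement's English description precedes it below -/
import Mathlib

section
/- (Massart's Lemma) Let A be a finite set of vectors in ℝ^m. Then E_{ξ∈{±1}^m}[max_{a∈A} (1/m) Σ_{i=1}^m ξ_i a_i] ≤ max_{a∈A} ‖a‖₂ · √(2 log|A|)/m. -/
open Finset Real

private lemma sum_eps_zero (m : ℕ) (i : Fin m) :
    ∑ b : Fin m → Bool, (if b i then (1:ℝ) else -1) = 0 := by
  have inv : Function.Involutive (fun b : Fin m → Bool => Function.update b i (!b i)) := by
    intro b
    ext j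
    by_cases h : j = i
    · subst h; simp
    · simp [Function.update_of_ne h]
  let e : (Fin m → Bool) ≃ (Fin m → Bool) := inv.toPerm
  have h1 : ∑ b : Fin m → Bool, (if e b i then (1:ℝ) else -1)
      = ∑ b : Fin m → Bool, (if b i then (1:ℝ) else -1) :=
    Equiv.sum_comp e (fun c => if c i then (1:ℝ) else -1)
  have h2 : ∀ b : Fin m → Bool, (if e b i then (1:ℝ) else -1)
      = -(if b i then (1:ℝ) else -1) := by
    intro b
    have he : e b i = !(b i) := by
      simp [e, Function.Involutive.toPerm]
    rw [he]; cases b i <;> simp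
  simp only [h2, Finset.sum_neg_distrib] at h1
  linarith

private lemma le_sup'' {α ι : Type*} [LinearOrder α] {s : Finset ι} (H : s.Nonempty)
    (f : ι → α) {b : ι} (hb : b ∈ s) : f b ≤ s.sup' H f :=
  (Finset.sup'_le_iff H f).1 le_rfl b hb

set_option maxHeartbeats 1000000 in
private lemma massart_core (m : ℕ) (A : Finset (Fin m → ℝ)) (hA : A.Nonempty) :
    (∑ b : Fin m → Bool,
        A.sup' hA fun a => ∑ i, (if b i then (1 : ℝ) else -1) * a i) / 2 ^ m
      ≤ (A.sup' hA fun a => Real.sqrt (∑ i, a i ^ 2)) *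
          Real.sqrt (2 * Real.log A.card) := by
  set r := A.sup' hA fun a => Real.sqrt (∑ i, a i ^ 2) with hrdef
  obtain ⟨a₀, ha₀⟩ := id hA
  have hr0 : 0 ≤ r := le_trans (Real.sqrt_nonneg _)
    (le_sup'' hA (fun a => Real.sqrt (∑ i, a i ^ 2)) ha₀)
  set T : (Fin m → Bool) → ℝ :=
    fun b => A.sup' hA fun a => ∑ i, (if b i then (1:ℝ) else -1) * a i with hT
  rcases eq_or_lt_of_le hr0 with hr | hr
  · -- r = 0 : every vector is zero
    have hz : ∀ a ∈ A, ∀ i, a i = 0 := by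
      intro a ha i
      have h1 : Real.sqrt (∑ j, a j ^ 2) ≤ r :=
        le_sup'' hA (fun a => Real.sqrt (∑ j, a j ^ 2)) ha
      have h2 : ∑ j, a j ^ 2 = 0 := by
        have hz' : Real.sqrt (∑ j, a j ^ 2) = 0 :=
          le_antisymm (hr ▸ h1) (Real.sqrt_nonneg _)
        have := (Real.sqrt_eq_zero (by positivity)).mp hz'
        exact this
      have h3 := (Finset.sum_eq_zero_iff_of_nonneg (fun j _ => sq_nonneg (a j))).mp h2 i
        (Finset.mem_univ i)
      exact pow_eq_zero_iff (two_ne_zero) |>.mp h3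
    have hTz : ∀ b, T b = 0 := by
      intro b
      apply le_antisymm
      · apply Finset.sup'_le
        intro a ha
        simp [hz a ha]
      · have h := le_sup'' hA (fun a => ∑ i, (if b i then (1:ℝ) else -1) * a i) ha₀
        calc (0:ℝ) = ∑ i, (if b i then (1:ℝ) else -1) * a₀ i := by simp [hz a₀ ha₀]
          _ ≤ T b := h
    simp only [hT] at *
    rw [Finset.sum_congr rfl (fun b _ => hTz b)]
    simp
    positivity
  · -- r > 0
    by_cases hN : A.card = 1
    · obtain ⟨a, hAe⟩ := Finset.card_eq_one.mp hN
      have hTb : ∀ b, T b = ∑ i, (if b i then (1:ℝ) else -1) * a i := by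
        intro b
        simp [hT, hAe]
      rw [Finset.sum_congr rfl (fun b _ => hTb b)]
      rw [Finset.sum_comm]
      have : ∀ i : Fin m, ∑ b : Fin m → Bool, (if b i then (1:ℝ) else -1) * a i
          = (∑ b : Fin m → Bool, (if b i then (1:ℝ) else -1)) * a i := by
        intro i; rw [Finset.sum_mul]
      rw [Finset.sum_congr rfl (fun i _ => this i)]
      simp only [sum_eps_zero]
      simp
      positivity
    · -- main case : r > 0, A.card ≥ 2
      have hcard1 : 1 ≤ A.card := Finset.card_pos.mpr ⟨a₀, ha₀⟩
      have hcard2 : 2 ≤ A.card := by omega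
      have hL : 0 < Real.log A.card := Real.log_pos (by exact_mod_cast hcard2)
      set L := Real.log A.card with hLdef
      set s := Real.sqrt (2 * L) with hsdef
      have hs : 0 < s := Real.sqrt_pos.mpr (by linarith)
      have hs2 : s ^ 2 = 2 * L := Real.sq_sqrt (by linarith)
      set lam := s / r with hlamdef
      have hlam : 0 < lam := div_pos hs hr
      have hw' : ∑ _b : Fin m → Bool, ((2:ℝ)^m)⁻¹ = 1 := by
        rw [Finset.sum_const, Finset.card_univ, Fintype.card_fun, Fintype.card_bool,
          Fintype.card_fin, nsmul_eq_mul]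
        push_cast
        field_simp
      have jensen : Real.exp (lam * ((∑ b, T b) / 2 ^ m))
          ≤ ∑ b : Fin m → Bool, ((2:ℝ)^m)⁻¹ * Real.exp (lam * T b) := by
        have h := convexOn_exp.map_sum_le (t := Finset.univ)
          (w := fun _ : Fin m → Bool => ((2:ℝ)^m)⁻¹)
          (p := fun b => lam * T b) (fun _ _ => by positivity) hw' (fun _ _ => Set.mem_univ _)
        simp only [smul_eq_mul] at h
        have heq : ∑ b : Fin m → Bool, ((2:ℝ)^m)⁻¹ * (lam * T b)
            = lam * ((∑ b, T b) / 2 ^ m) := by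
          rw [← Finset.mul_sum, ← Finset.mul_sum]
          field_simp
        rw [heq] at h
        exact h
      have hpt : ∀ b : Fin m → Bool, Real.exp (lam * T b)
          ≤ ∑ a ∈ A, Real.exp (lam * ∑ i, (if b i then (1:ℝ) else -1) * a i) := by
        intro b
        obtain ⟨a₁, ha₁, hEq⟩ := Finset.exists_mem_eq_sup' hA
          (fun a => ∑ i, (if b i then (1:ℝ) else -1) * a i)
        have hTeq : T b = ∑ i, (if b i then (1:ℝ) else -1) * a₁ i := hEq
        rw [hTeq]
        apply Finset.single_le_sum
          (f := fun a => Real.exp (lam * ∑ i, (if b i then (1:ℝ) else -1) * a i))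
          (fun a _ => (Real.exp_pos _).le) ha₁
      have hsw : ∀ a ∈ A,
          (∑ b : Fin m → Bool, Real.exp (lam * ∑ i, (if b i then (1:ℝ) else -1) * a i))
          = ∏ i, (Real.exp (lam * a i) + Real.exp (-(lam * a i))) := by
        intro a _
        have h1 : ∀ b : Fin m → Bool,
            Real.exp (lam * ∑ i, (if b i then (1:ℝ) else -1) * a i)
            = ∏ i, Real.exp (lam * ((if b i then (1:ℝ) else -1) * a i)) := by
          intro b; rw [← Real.exp_sum, Finset.mul_sum]
        simp only [h1]
        rw [← Fintype.prod_sum (fun i (t : Bool) =>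
          Real.exp (lam * ((if t then (1:ℝ) else -1) * a i)))]
        apply Finset.prod_congr rfl
        intro i _
        rw [Fintype.sum_bool]
        norm_num
      have hsum_le : ∀ a ∈ A, ∑ i, a i ^ 2 ≤ r ^ 2 := by
        intro a ha
        have h1 : Real.sqrt (∑ i, a i ^ 2) ≤ r :=
          le_sup'' hA (fun a => Real.sqrt (∑ i, a i ^ 2)) ha
        calc ∑ i, a i ^ 2 = Real.sqrt (∑ i, a i ^ 2) ^ 2 := (Real.sq_sqrt (by positivity)).symm
          _ ≤ r ^ 2 := by nlinarith [Real.sqrt_nonneg (∑ i, a i ^ 2), h1]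
      have hprod : ∀ a ∈ A, (∏ i, (Real.exp (lam * a i) + Real.exp (-(lam * a i))))
          ≤ 2 ^ m * Real.exp (lam ^ 2 * r ^ 2 / 2) := by
        intro a ha
        calc ∏ i, (Real.exp (lam * a i) + Real.exp (-(lam * a i)))
            = ∏ i, 2 * Real.cosh (lam * a i) := by
              apply Finset.prod_congr rfl
              intro i _
              rw [Real.cosh_eq]
              ring
          _ = 2 ^ m * ∏ i, Real.cosh (lam * a i) := by
              rw [Finset.prod_mul_distrib, Finset.prod_const, Finset.card_univ, Fintype.card_fin]
          _ ≤ 2 ^ m * ∏ i, Real.exp ((lam * a i) ^ 2 / 2) := by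
              have := Finset.prod_le_prod (s := Finset.univ)
                (fun (i : Fin m) _ => (Real.cosh_pos (x := lam * a i)).le)
                (fun (i : Fin m) _ => Real.cosh_le_exp_half_sq (lam * a i))
              have h2 : (0:ℝ) ≤ 2 ^ m := by positivity
              exact mul_le_mul_of_nonneg_left this h2
          _ = 2 ^ m * Real.exp (lam ^ 2 * (∑ i, a i ^ 2) / 2) := by
              rw [← Real.exp_sum]
              congr 1
              rw [Finset.mul_sum, Finset.sum_div]
              congr 1
              apply Finset.sum_congr rfl
              intro i _
              rw [mul_pow]
          _ ≤ 2 ^ m * Real.exp (lam ^ 2 * r ^ 2 / 2) := by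
              have hmono : lam ^ 2 * (∑ i, a i ^ 2) / 2 ≤ lam ^ 2 * r ^ 2 / 2 := by
                have := hsum_le a ha
                nlinarith [sq_nonneg lam]
              have h2 : (0:ℝ) ≤ 2 ^ m := by positivity
              exact mul_le_mul_of_nonneg_left (Real.exp_le_exp.mpr hmono) h2
      have hmain : Real.exp (lam * ((∑ b, T b) / 2 ^ m))
          ≤ A.card * Real.exp (lam ^ 2 * r ^ 2 / 2) := by
        calc Real.exp (lam * ((∑ b, T b) / 2 ^ m))
            ≤ ∑ b : Fin m → Bool, ((2:ℝ)^m)⁻¹ * Real.exp (lam * T b) := jensen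
          _ ≤ ∑ b : Fin m → Bool, ((2:ℝ)^m)⁻¹ *
                ∑ a ∈ A, Real.exp (lam * ∑ i, (if b i then (1:ℝ) else -1) * a i) := by
              apply Finset.sum_le_sum
              intro b _
              exact mul_le_mul_of_nonneg_left (hpt b) (by positivity)
          _ = ((2:ℝ)^m)⁻¹ * ∑ a ∈ A,
                ∑ b : Fin m → Bool, Real.exp (lam * ∑ i, (if b i then (1:ℝ) else -1) * a i) := by
              rw [← Finset.mul_sum, Finset.sum_comm]
          _ ≤ ((2:ℝ)^m)⁻¹ * ∑ a ∈ A, 2 ^ m * Real.exp (lam ^ 2 * r ^ 2 / 2) := by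
              apply mul_le_mul_of_nonneg_left _ (by positivity)
              apply Finset.sum_le_sum
              intro a ha
              exact (hsw a ha).le.trans (hprod a ha)
          _ = A.card * Real.exp (lam ^ 2 * r ^ 2 / 2) := by
              rw [Finset.sum_const, nsmul_eq_mul]
              field_simp
      have hNpos : (0:ℝ) < A.card := by positivity
      have hlog : lam * ((∑ b, T b) / 2 ^ m) ≤ L + lam ^ 2 * r ^ 2 / 2 := by
        have h := (Real.le_log_iff_exp_le
          (by positivity : (0:ℝ) < (A.card : ℝ) * Real.exp (lam ^ 2 * r ^ 2 / 2))).mpr hmain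
        rwa [Real.log_mul (ne_of_gt hNpos) (Real.exp_ne_zero _), Real.log_exp] at h
      have hlam2 : lam ^ 2 * r ^ 2 = s ^ 2 := by
        rw [hlamdef]
        field_simp
      have h5 : lam * ((∑ b, T b) / 2 ^ m) ≤ s ^ 2 := by
        have : lam ^ 2 * r ^ 2 / 2 = L := by rw [hlam2, hs2]; ring
        linarith [hlog]
      have h7 : s * ((∑ b, T b) / 2 ^ m) ≤ s ^ 2 * r := by
        have h8 := mul_le_mul_of_nonneg_left h5 hr.le
        have h9 : r * (lam * ((∑ b, T b) / 2 ^ m)) = s * ((∑ b, T b) / 2 ^ m) := by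
          rw [hlamdef]
          field_simp
        nlinarith [h8, h9]
      nlinarith [h7, hs, sq_nonneg s]

theorem stmt_7 (m : ℕ) (hm : 1 ≤ m) (A : Finset (Fin m → ℝ)) (hA : A.Nonempty) :
    (∑ b : Fin m → Bool,
        A.sup' hA fun a => (1 / (m : ℝ)) * ∑ i, (if b i then (1 : ℝ) else -1) * a i) / 2 ^ m
      ≤ (A.sup' hA fun a => Real.sqrt (∑ i, a i ^ 2)) *
          Real.sqrt (2 * Real.log A.card) / m := by
  have hm0 : (0:ℝ) < m := by exact_mod_cast hm
  have hsup : ∀ b : Fin m → Bool,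
      (A.sup' hA fun a => (1 / (m : ℝ)) * ∑ i, (if b i then (1 : ℝ) else -1) * a i)
        = (1 / (m : ℝ)) * A.sup' hA fun a => ∑ i, (if b i then (1 : ℝ) else -1) * a i := by
    intro b
    exact (Finset.comp_sup'_eq_sup'_comp hA (fun x => (1 / (m:ℝ)) * x)
      (fun x y => by
        exact mul_max_of_nonneg x y (by positivity))).symm
  simp only [hsup]
  rw [← Finset.mul_sum]
  have key := massart_core m A hA
  set S := ∑ b : Fin m → Bool,
      A.sup' hA fun a => ∑ i, (if b i then (1 : ℝ) else -1) * a i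
  have h1 : 1 / (m:ℝ) * S / 2 ^ m = (S / 2 ^ m) / m := by ring
  rw [h1]
  gcongr
end

section
/- (Norm reduction by unit replication) Suppose the top unit of a network contributes factor c to γ_{p,q}, with incoming weight matrix being a single row of ℓ_p norm c. Replace it by H identical copies and add a new output unit with weight 1/H to each copy. Then the new top two layers contribute ‖W_{new mid}‖_{p,q}·‖W_{new top}‖_p = (H c^q)^{1/q} · (H·(1/H)^p)^{1/p} = c · H^{1/q − 1/p*}, where 1/p + 1/p* = 1. In particular when 1/p + 1/q < 1 (i.e. 1/q < 1/p*) this strictly decreases the product of layer norms while computing the same function. -/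
theorem stmt_13 (H : ℕ) (hH : 1 ≤ H) (c p q ps : ℝ) (hc : 0 ≤ c)
    (hp : 1 ≤ p) (hq : 1 ≤ q) (hps : 1 / p + 1 / ps = 1) :
    ((H : ℝ) * c ^ q) ^ (1 / q) * ((H : ℝ) * (1 / (H : ℝ)) ^ p) ^ (1 / p)
        = c * (H : ℝ) ^ (1 / q - 1 / ps) ∧
    (1 / p + 1 / q < 1 → 0 < c → 2 ≤ H → c * (H : ℝ) ^ (1 / q - 1 / ps) < c) := by
  have hH0 : (0:ℝ) < (H:ℝ) := by exact_mod_cast Nat.lt_of_lt_of_le Nat.zero_lt_one hH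
  have hp0 : p ≠ 0 := by positivity
  have hq0 : q ≠ 0 := by positivity
  have hps1 : 1 / ps = 1 - 1 / p := by linarith
  have hnorm : (0:ℝ) ≤ c ^ q := Real.rpow_nonneg hc q
  constructor
  · rw [Real.mul_rpow hH0.le hnorm, Real.mul_rpow hH0.le (by positivity),
      ← Real.rpow_mul hc, ← Real.rpow_mul (le_of_lt (by positivity : (0:ℝ) < 1/(H:ℝ)))]
    rw [mul_one_div_cancel hq0, mul_one_div_cancel hp0, Real.rpow_one, Real.rpow_one,
      one_div, Real.rpow_sub hH0, hps1, Real.rpow_sub hH0, Real.rpow_one]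
    field_simp
  · intro h1 hc0 hH2
    have hexp : 1 / q - 1 / ps < 0 := by rw [hps1]; linarith
    have : (H:ℝ) ^ (1 / q - 1 / ps) < 1 := by
      apply Real.rpow_lt_one_of_one_lt_of_neg _ hexp
      exact_mod_cast hH2.trans_lt' one_lt_two
    nlinarith
end

section
/- For reals a, b ≥ 0, a² + b² ≥ 2ab with equality iff a = b; consequently, for a two-layer network, min over rescalings c > 0 of (c·a)² + (b/c)² equals 2ab. Applied rowwise: min_{f_W = f} Σ_{j=1}^H (‖W₁[j,:]‖₂² + |W₂[j]|²) = 2 min_{f_W = f} Σ_{j=1}^H ‖W₁[j,:]‖₂ · |W₂[j]|, where the minimum is over two-layer RELU networks computing f (using per-unit rescaling invariance of RELU). -/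
noncomputable def relu (z : ℝ) : ℝ := max z 0

/-- A two-layer RELU network. -/
noncomputable def net2 {H D : ℕ} (W₁ : Fin H → Fin D → ℝ) (W₂ : Fin H → ℝ) :
    (Fin D → ℝ) → ℝ :=
  fun x => ∑ j, W₂ j * relu (∑ i, W₁ j i * x i)

lemma relu_smul (c z : ℝ) (hc : 0 ≤ c) : relu (c * z) = c * relu z := by
  unfold relu
  rw [mul_comm c (max z 0), max_mul_of_nonneg _ _ hc, zero_mul, mul_comm]

/-- Rescaling lemma: every network can be rescaled rowwise so that the
ℓ₂ cost equals twice the product cost of the original. -/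
lemma rescale_net {H D : ℕ} (W₁ : Fin H → Fin D → ℝ) (W₂ : Fin H → ℝ) :
    ∃ (V₁ : Fin H → Fin D → ℝ) (V₂ : Fin H → ℝ), net2 V₁ V₂ = net2 W₁ W₂ ∧
      ∑ j, ((∑ i, (V₁ j i) ^ 2) + (V₂ j) ^ 2)
        = 2 * ∑ j, Real.sqrt (∑ i, (W₁ j i) ^ 2) * |W₂ j| := by
  set r : Fin H → ℝ := fun j => Real.sqrt (∑ i, (W₁ j i) ^ 2) with hr
  have hrnn : ∀ j, 0 ≤ r j := fun j => Real.sqrt_nonneg _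
  have hr2 : ∀ j, (r j) ^ 2 = ∑ i, (W₁ j i) ^ 2 := fun j =>
    Real.sq_sqrt (Finset.sum_nonneg fun i _ => sq_nonneg _)
  set c : Fin H → ℝ := fun j => Real.sqrt (|W₂ j| / r j) with hc
  refine ⟨fun j i => if r j = 0 ∨ W₂ j = 0 then 0 else c j * W₁ j i,
    fun j => if r j = 0 ∨ W₂ j = 0 then 0 else W₂ j / c j, ?_, ?_⟩
  · funext x
    unfold net2
    refine Finset.sum_congr rfl fun j _ => ?_
    by_cases h : r j = 0 ∨ W₂ j = 0
    · simp only [if_pos h, zero_mul]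
      rcases h with h | h
      · have hz : ∀ i, W₁ j i = 0 := by
          intro i
          have hs : ∑ i, (W₁ j i) ^ 2 = 0 := by
            have := hr2 j; rw [h] at this; linarith
          have := (Finset.sum_eq_zero_iff_of_nonneg
            (fun i _ => sq_nonneg (W₁ j i))).mp hs i (Finset.mem_univ i)
          exact pow_eq_zero_iff (n := 2) (by norm_num) |>.mp this
        simp [hz, relu]
      · simp [h]
    · have hcond := h
      push_neg at h
      obtain ⟨hr0, hw0⟩ := h
      have hrpos : 0 < r j := lt_of_le_of_ne (hrnn j) (Ne.symm hr0)
      have hcpos : 0 < c j := Real.sqrt_pos.mpr (div_pos (abs_pos.mpr hw0) hrpos)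
      simp only [if_neg hcond]
      have hsum : ∑ i, c j * W₁ j i * x i = c j * ∑ i, W₁ j i * x i := by
        rw [Finset.mul_sum]; exact Finset.sum_congr rfl fun i _ => by ring
      rw [hsum, relu_smul _ _ hcpos.le]
      field_simp
  · rw [Finset.mul_sum]
    refine Finset.sum_congr rfl fun j _ => ?_
    by_cases h : r j = 0 ∨ W₂ j = 0
    · simp only [if_pos h]
      rcases h with h | h
      · rw [show Real.sqrt (∑ i, (W₁ j i) ^ 2) = r j from rfl, h]; simp
      · simp [h]
    · have hcond := h
      push_neg at h
      obtain ⟨hr0, hw0⟩ := h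
      have hrpos : 0 < r j := lt_of_le_of_ne (hrnn j) (Ne.symm hr0)
      have hwpos : 0 < |W₂ j| := abs_pos.mpr hw0
      have hcsq : (c j) ^ 2 = |W₂ j| / r j :=
        Real.sq_sqrt (le_of_lt (div_pos hwpos hrpos))
      have hcpos : 0 < c j := Real.sqrt_pos.mpr (div_pos hwpos hrpos)
      simp only [if_neg hcond]
      have h1 : ∑ i, (c j * W₁ j i) ^ 2 = (c j) ^ 2 * (r j) ^ 2 := by
        rw [hr2, Finset.mul_sum]
        exact Finset.sum_congr rfl fun i _ => by ring
      have h2 : (W₂ j / c j) ^ 2 = (W₂ j) ^ 2 / (c j) ^ 2 := by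
        rw [div_pow]
      rw [h1, h2, hcsq]
      have habs : (W₂ j) ^ 2 = |W₂ j| ^ 2 := (sq_abs _).symm
      rw [habs]
      field_simp
      nlinarith [sq_abs (W₂ j)]
  
theorem stmt_14 (a b : ℝ) (ha : 0 ≤ a) (hb : 0 ≤ b) (H D : ℕ)
    (f : (Fin D → ℝ) → ℝ)
    (hf : ∃ (W₁ : Fin H → Fin D → ℝ) (W₂ : Fin H → ℝ), net2 W₁ W₂ = f) :
    a ^ 2 + b ^ 2 ≥ 2 * a * b ∧
    (a ^ 2 + b ^ 2 = 2 * a * b ↔ a = b) ∧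
    (0 < a → 0 < b →
      IsLeast {x | ∃ c > 0, x = (c * a) ^ 2 + (b / c) ^ 2} (2 * a * b)) ∧
    sInf {t | ∃ (W₁ : Fin H → Fin D → ℝ) (W₂ : Fin H → ℝ), net2 W₁ W₂ = f ∧
        t = ∑ j, ((∑ i, (W₁ j i) ^ 2) + (W₂ j) ^ 2)}
      = 2 * sInf {t | ∃ (W₁ : Fin H → Fin D → ℝ) (W₂ : Fin H → ℝ), net2 W₁ W₂ = f ∧
        t = ∑ j, Real.sqrt (∑ i, (W₁ j i) ^ 2) * |W₂ j|} := by
  refine ⟨by nlinarith [sq_nonneg (a - b)], ?_, ?_, ?_⟩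
  · constructor
    · intro h
      have : (a - b) ^ 2 = 0 := by nlinarith
      have := pow_eq_zero_iff (n := 2) (by norm_num) |>.mp this
      linarith
    · intro h; subst h; ring
  · intro hap hbp
    constructor
    · refine ⟨Real.sqrt (b / a), Real.sqrt_pos.mpr (div_pos hbp hap), ?_⟩
      have hcsq : (Real.sqrt (b / a)) ^ 2 = b / a :=
        Real.sq_sqrt (le_of_lt (div_pos hbp hap))
      have hcpos : 0 < Real.sqrt (b / a) := Real.sqrt_pos.mpr (div_pos hbp hap)
      rw [mul_pow, div_pow, hcsq]
      field_simp
      ring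
    · rintro x ⟨c, hcpos, rfl⟩
      have hkey : c * a * (b / c) = a * b := by field_simp
      nlinarith [sq_nonneg (c * a - b / c)]
  · obtain ⟨U₁, U₂, hU⟩ := hf
    set S := {t | ∃ (W₁ : Fin H → Fin D → ℝ) (W₂ : Fin H → ℝ), net2 W₁ W₂ = f ∧
        t = ∑ j, ((∑ i, (W₁ j i) ^ 2) + (W₂ j) ^ 2)} with hS
    set T := {t | ∃ (W₁ : Fin H → Fin D → ℝ) (W₂ : Fin H → ℝ), net2 W₁ W₂ = f ∧
        t = ∑ j, Real.sqrt (∑ i, (W₁ j i) ^ 2) * |W₂ j|} with hT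
    have hSne : S.Nonempty := ⟨_, U₁, U₂, hU, rfl⟩
    have hTne : T.Nonempty := ⟨_, U₁, U₂, hU, rfl⟩
    have hSbdd : BddBelow S := by
      refine ⟨0, ?_⟩
      rintro x ⟨W₁, W₂, -, rfl⟩
      exact Finset.sum_nonneg fun j _ =>
        add_nonneg (Finset.sum_nonneg fun i _ => sq_nonneg _) (sq_nonneg _)
    have hTbdd : BddBelow T := by
      refine ⟨0, ?_⟩
      rintro x ⟨W₁, W₂, -, rfl⟩
      exact Finset.sum_nonneg fun j _ =>
        mul_nonneg (Real.sqrt_nonneg _) (abs_nonneg _)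
    -- every element of S dominates twice some element of T
    have hge : sInf S ≥ 2 * sInf T := by
      refine le_csInf hSne ?_
      rintro s ⟨W₁, W₂, hW, rfl⟩
      have hmem : (∑ j, Real.sqrt (∑ i, (W₁ j i) ^ 2) * |W₂ j|) ∈ T :=
        ⟨W₁, W₂, hW, rfl⟩
      have h1 : sInf T ≤ ∑ j, Real.sqrt (∑ i, (W₁ j i) ^ 2) * |W₂ j| :=
        csInf_le hTbdd hmem
      have h2 : 2 * ∑ j, Real.sqrt (∑ i, (W₁ j i) ^ 2) * |W₂ j|
          ≤ ∑ j, ((∑ i, (W₁ j i) ^ 2) + (W₂ j) ^ 2) := by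
        rw [Finset.mul_sum]
        refine Finset.sum_le_sum fun j _ => ?_
        have hr2 : (Real.sqrt (∑ i, (W₁ j i) ^ 2)) ^ 2 = ∑ i, (W₁ j i) ^ 2 :=
          Real.sq_sqrt (Finset.sum_nonneg fun i _ => sq_nonneg _)
        nlinarith [sq_nonneg (Real.sqrt (∑ i, (W₁ j i) ^ 2) - |W₂ j|),
          sq_abs (W₂ j)]
      linarith
    have hle : sInf S ≤ 2 * sInf T := by
      have key : ∀ t ∈ T, sInf S ≤ 2 * t := by
        rintro t ⟨W₁, W₂, hW, rfl⟩
        obtain ⟨V₁, V₂, hVnet, hVcost⟩ := rescale_net W₁ W₂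
        have : (2 * ∑ j, Real.sqrt (∑ i, (W₁ j i) ^ 2) * |W₂ j|) ∈ S :=
          ⟨V₁, V₂, hVnet.trans hW, hVcost.symm⟩
        exact csInf_le hSbdd this
      have : sInf S / 2 ≤ sInf T :=
        le_csInf hTne fun t ht => by linarith [key t ht]
      linarith
    linarith
end
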